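/- arXiv:2603.18490 — 5 statements merged into one kernel-verified Lean document; each statement's English description precedes it below -/
import Mathlib

section
/- Let μ be a measure on a measurable space X and let a > 0. Let g₀, g : X → ℝ be measurable with g₀ ≥ 0 μ-almost everywhere, g ≥ a μ-almost everywhere, ∫ g₀ dμ = 1 and ∫ g dμ = 1. Assume that x ↦ g₀(x)·log(g₀(x)/g(x)) is μ-integrable and that ∫ (g − g₀)² dμ < ∞. Then the Kullback–Leibler divergence satisfies ∫_X g₀ log(g₀/g) dμ ≤ (1/a) ∫_X (g − g₀)² dμ. -/
open MeasureTheory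

/-- KL divergence bound: `D(g₀,g) ≤ (1/a) ‖g - g₀‖²_{L²(μ)}` for densities with
`g` bounded below by `a > 0`. -/
theorem kl_le_inv_lowerBound_mul_L2 {X : Type*} [MeasurableSpace X]
    (μ : Measure X) (a : ℝ) (ha : 0 < a)
    (g₀ g : X → ℝ) (hg₀m : Measurable g₀) (hgm : Measurable g)
    (hg₀0 : ∀ᵐ x ∂μ, 0 ≤ g₀ x) (hga : ∀ᵐ x ∂μ, a ≤ g x)
    (hg₀1 : ∫ x, g₀ x ∂μ = 1) (hg1 : ∫ x, g x ∂μ = 1)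
    (hKL : Integrable (fun x => g₀ x * Real.log (g₀ x / g x)) μ)
    (hL2 : Integrable (fun x => (g x - g₀ x) ^ 2) μ) :
    ∫ x, g₀ x * Real.log (g₀ x / g x) ∂μ ≤ (1 / a) * ∫ x, (g x - g₀ x) ^ 2 ∂μ := by
  have hg₀int : Integrable g₀ μ := by
    by_contra h
    rw [integral_undef h] at hg₀1
    norm_num at hg₀1
  have hgint : Integrable g μ := by
    by_contra h
    rw [integral_undef h] at hg1
    norm_num at hg1
  -- RHS function
  have hsubint : Integrable (fun x => g₀ x - g x) μ := hg₀int.sub hgint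
  have hRHSint : Integrable (fun x => (g x - g₀ x) ^ 2 / a + (g₀ x - g x)) μ :=
    (hL2.div_const a).add hsubint
  have hmono : ∀ᵐ x ∂μ, g₀ x * Real.log (g₀ x / g x)
      ≤ (g x - g₀ x) ^ 2 / a + (g₀ x - g x) := by
    filter_upwards [hg₀0, hga] with x h0 hax
    have hgpos : 0 < g x := lt_of_lt_of_le ha hax
    have hsq : (g x - g₀ x) ^ 2 / g x ≤ (g x - g₀ x) ^ 2 / a :=
      div_le_div_of_nonneg_left (sq_nonneg _) ha hax
    rcases eq_or_lt_of_le h0 with h0' | h0'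
    · simp only [← h0', zero_mul]
      have h2 : g x * a ≤ g x ^ 2 := by nlinarith
      have h3 : g x ≤ g x ^ 2 / a := (le_div_iff₀ ha).mpr h2
      have h4 : (g x - 0) ^ 2 = g x ^ 2 := by ring
      rw [h4]
      linarith
    · have hlog : Real.log (g₀ x / g x) ≤ g₀ x / g x - 1 :=
        Real.log_le_sub_one_of_pos (div_pos h0' hgpos)
      have h2 : g₀ x * Real.log (g₀ x / g x) ≤ g₀ x * (g₀ x / g x - 1) :=
        mul_le_mul_of_nonneg_left hlog h0
      have h3 : g₀ x * (g₀ x / g x - 1) = (g x - g₀ x) ^ 2 / g x + (g₀ x - g x) := by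
        field_simp
        ring
      linarith
  have := integral_mono_ae hKL hRHSint hmono
  calc ∫ x, g₀ x * Real.log (g₀ x / g x) ∂μ
      ≤ ∫ x, ((g x - g₀ x) ^ 2 / a + (g₀ x - g x)) ∂μ := this
    _ = (1 / a) * ∫ x, (g x - g₀ x) ^ 2 ∂μ := by
        rw [integral_add (hL2.div_const a) hsubint]
        rw [integral_sub hg₀int hgint, hg₀1, hg1, integral_div]
        ring
end

section
/- Let μ be a measure on a measurable space X and let a > 0. Let g₀, g : X → ℝ be measurable with g₀ ≥ 0 μ-almost everywhere and g ≥ a μ-almost everywhere. Then, as an inequality between Lebesgue integrals of nonnegative functions (with values in [0, ∞], and with log 0 interpreted as 0), ∫_X g₀(x)·(log(g₀(x)/g(x)))² dμ(x) ≤ (1/a) ∫_X (g(x) − g₀(x))² dμ(x). -/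
/-!
Pointwise, with `u = g₀ / g`, the integrand on the left is `g · u (log u)²`. Writing `u = e^{2x}`,
the inequality `x² ≤ sinh² x` gives `u (log u)² ≤ (u - 1)²`, so the integrand is at most
`g (u - 1)² = (g - g₀)² / g ≤ (g - g₀)² / a`; integrate.
-/

open MeasureTheory Real

lemma sq_le_sinh_sq (x : ℝ) : x ^ 2 ≤ sinh x ^ 2 := by
  rw [sq_le_sq, abs_sinh]
  exact self_le_sinh_iff.mpr (abs_nonneg x)

lemma mul_log_sq_le_sub_one_sq {t : ℝ} (ht : 0 < t) : t * log t ^ 2 ≤ (t - 1) ^ 2 := by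
  set x := log t / 2
  have hexp : exp x ^ 2 = t := by
    rw [← exp_nat_mul, show (2 : ℕ) * x = log t by push_cast; ring, exp_log ht]
  have hsinh : 2 * exp x * sinh x = exp x ^ 2 - 1 := by
    rw [sinh_eq, exp_neg]
    field_simp
  calc t * log t ^ 2 = 4 * exp x ^ 2 * x ^ 2 := by rw [hexp]; ring
    _ ≤ 4 * exp x ^ 2 * sinh x ^ 2 :=
        mul_le_mul_of_nonneg_left (sq_le_sinh_sq x) (by positivity)
    _ = (t - 1) ^ 2 := by rw [← hexp, ← hsinh]; ring

lemma mul_log_div_sq_le {p q : ℝ} (hp : 0 ≤ p) (hq : 0 < q) :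
    p * log (p / q) ^ 2 ≤ (q - p) ^ 2 / q := by
  rcases hp.eq_or_lt with rfl | hp
  · simp only [zero_mul, sub_zero]
    positivity
  calc p * log (p / q) ^ 2 = q * (p / q * log (p / q) ^ 2) := by field_simp
    _ ≤ q * (p / q - 1) ^ 2 := by gcongr; exact mul_log_sq_le_sub_one_sq (by positivity)
    _ = (q - p) ^ 2 / q := by field_simp; ring

theorem secondMoment_log_ratio_le_general {X : Type*} [MeasurableSpace X]
    (μ : Measure X) (a : ℝ) (ha : 0 < a)
    (g₀ g : X → ℝ)
    (hg₀0 : ∀ᵐ x ∂μ, 0 ≤ g₀ x) (hga : ∀ᵐ x ∂μ, a ≤ g x) :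
    ∫⁻ x, ENNReal.ofReal (g₀ x * (Real.log (g₀ x / g x)) ^ 2) ∂μ
      ≤ ENNReal.ofReal (1 / a) * ∫⁻ x, ENNReal.ofReal ((g x - g₀ x) ^ 2) ∂μ := by
  rw [← lintegral_const_mul' _ _ ENNReal.ofReal_ne_top]
  refine lintegral_mono_ae ?_
  filter_upwards [hg₀0, hga] with x hg₀x hgx
  rw [← ENNReal.ofReal_mul (by positivity)]
  refine ENNReal.ofReal_le_ofReal ?_
  calc g₀ x * log (g₀ x / g x) ^ 2 ≤ (g x - g₀ x) ^ 2 / g x :=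
        mul_log_div_sq_le hg₀x (ha.trans_le hgx)
    _ ≤ (g x - g₀ x) ^ 2 / a := by gcongr
    _ = 1 / a * (g x - g₀ x) ^ 2 := by ring

/-- Second moment bound for the log-likelihood ratio:
`∫ g₀ (log(g₀/g))² dμ ≤ (1/a) ∫ (g - g₀)² dμ`, as Lebesgue integrals in `[0,∞]`. -/
theorem secondMoment_log_ratio_le {X : Type*} [MeasurableSpace X]
    (μ : Measure X) (a : ℝ) (ha : 0 < a)
    (g₀ g : X → ℝ) (hg₀m : Measurable g₀) (hgm : Measurable g)
    (hg₀0 : ∀ᵐ x ∂μ, 0 ≤ g₀ x) (hga : ∀ᵐ x ∂μ, a ≤ g x) :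
    ∫⁻ x, ENNReal.ofReal (g₀ x * (Real.log (g₀ x / g x)) ^ 2) ∂μ
      ≤ ENNReal.ofReal (1 / a) * ∫⁻ x, ENNReal.ofReal ((g x - g₀ x) ^ 2) ∂μ :=
  secondMoment_log_ratio_le_general μ a ha g₀ g hg₀0 hga
end

section
/- Let μ be a finite measure on a measurable space X with total mass γ₀ = μ(X) ∈ (0, ∞), let 0 ≤ a with a·γ₀ < 1, and let g, g₀ : X → ℝ be densities with respect to μ (nonnegative measurable functions integrating to 1). Define the shifted densities g_a := a + (1 − aγ₀)·g and g_{0,a} := a + (1 − aγ₀)·g₀. Then 1 − ∫_X √(g_a(x)·g_{0,a}(x)) dμ(x) ≥ (1 − aγ₀)·(1 − ∫_X √(g(x)·g₀(x)) dμ(x)) − 2·√(aγ₀(1 − aγ₀)). -/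
/-!
With `c = 1 - aγ₀`, pointwise
`(a + c g)(a + c g₀) = a² + c² g g₀ + a c (g + g₀) ≤ (a + c √(g g₀) + √(a c (g + g₀)))²`.
Integrating, the last term is controlled by Cauchy–Schwarz:
`∫ √(a c (g + g₀)) dμ ≤ √(γ₀ · 2 a c) ≤ 2 √(a γ₀ c)`.
-/

open MeasureTheory

lemma Real.sqrt_shift_mul_shift_le {a c x y : ℝ} (ha : 0 ≤ a) (hc : 0 ≤ c) (hx : 0 ≤ x)
    (hy : 0 ≤ y) :
    √((a + c * x) * (a + c * y)) ≤ a + c * √(x * y) + √(a * c * (x + y)) := by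
  have hs := Real.sq_sqrt (mul_nonneg hx hy)
  have ht := Real.sq_sqrt (by positivity : 0 ≤ a * c * (x + y))
  have hs0 := Real.sqrt_nonneg (x * y)
  have ht0 := Real.sqrt_nonneg (a * c * (x + y))
  have hexpand : (a + c * x) * (a + c * y)
      = a ^ 2 + (c * √(x * y)) ^ 2 + √(a * c * (x + y)) ^ 2 := by
    rw [mul_pow, hs, ht]; ring
  rw [Real.sqrt_le_left (by positivity), hexpand]
  nlinarith [mul_nonneg (mul_nonneg ha hc) hs0, mul_nonneg ha ht0,
    mul_nonneg (mul_nonneg hc hs0) ht0]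

namespace MeasureTheory

variable {X : Type*} [MeasurableSpace X] {μ : Measure X} {f g : X → ℝ}

lemma Integrable.memLp_two_sqrt (hf : Integrable f μ) (hf0 : 0 ≤ᵐ[μ] f) :
    MemLp (fun x => √(f x)) 2 μ := by
  refine (memLp_two_iff_integrable_sq (Real.continuous_sqrt.comp_aestronglyMeasurable hf.1)).2 ?_
  refine hf.congr ?_
  filter_upwards [hf0] with x hx using (Real.sq_sqrt hx).symm

lemma Integrable.sqrt_mul (hf : Integrable f μ) (hg : Integrable g μ) (hf0 : 0 ≤ᵐ[μ] f)
    (hg0 : 0 ≤ᵐ[μ] g) : Integrable (fun x => √(f x * g x)) μ := by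
  refine ((hf.memLp_two_sqrt hf0).integrable_mul (hg.memLp_two_sqrt hg0)).congr ?_
  filter_upwards [hf0] with x hx using (Real.sqrt_mul hx _).symm

lemma integral_sqrt_le_sqrt_measureReal_mul_integral [IsFiniteMeasure μ] (hf : Integrable f μ)
    (hf0 : 0 ≤ᵐ[μ] f) : ∫ x, √(f x) ∂μ ≤ √(μ.real Set.univ * ∫ x, f x ∂μ) := by
  have hL2 : MemLp (fun x => √(f x)) (ENNReal.ofReal 2) μ := by
    simpa using hf.memLp_two_sqrt hf0
  have hCS := integral_mul_le_Lp_mul_Lq_of_nonneg Real.HolderConjugate.two_two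
    (ae_of_all _ fun _ => zero_le_one) (ae_of_all _ fun _ => Real.sqrt_nonneg _)
    (memLp_const 1) hL2
  simp only [one_mul, Real.one_rpow, integral_const, smul_eq_mul, mul_one] at hCS
  have hsq : ∫ x, √(f x) ^ (2 : ℝ) ∂μ = ∫ x, f x ∂μ := by
    refine integral_congr_ae ?_
    filter_upwards [hf0] with x hx
    rw [Real.rpow_two, Real.sq_sqrt hx]
  rwa [hsq, ← Real.mul_rpow measureReal_nonneg (integral_nonneg_of_ae hf0),
    ← Real.sqrt_eq_rpow] at hCS

lemma integral_sqrt_shift_mul_shift_le [IsFiniteMeasure μ] {a c : ℝ} (ha : 0 ≤ a) (hc : 0 ≤ c)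
    (hf : Integrable f μ) (hg : Integrable g μ) (hf0 : ∀ x, 0 ≤ f x) (hg0 : ∀ x, 0 ≤ g x) :
    ∫ x, √((a + c * f x) * (a + c * g x)) ∂μ
      ≤ a * μ.real Set.univ + c * ∫ x, √(f x * g x) ∂μ
        + √(μ.real Set.univ * (a * c * (∫ x, f x ∂μ + ∫ x, g x ∂μ))) := by
  have hsum_int : Integrable (fun x => a * c * (f x + g x)) μ := (hf.add hg).const_mul _
  have hsum_nonneg : 0 ≤ᵐ[μ] fun x => a * c * (f x + g x) :=
    ae_of_all _ fun x => by have := hf0 x; have := hg0 x; positivity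
  have haff_int : Integrable (fun x => √(f x * g x)) μ :=
    hf.sqrt_mul hg (ae_of_all _ hf0) (ae_of_all _ hg0)
  have hcross_int : Integrable (fun x => √(a * c * (f x + g x))) μ :=
    (hsum_int.memLp_two_sqrt hsum_nonneg).integrable one_le_two
  have hmain_int : Integrable (fun x => a + c * √(f x * g x)) μ :=
    (integrable_const a).add (haff_int.const_mul c)
  calc ∫ x, √((a + c * f x) * (a + c * g x)) ∂μ
      ≤ ∫ x, (a + c * √(f x * g x) + √(a * c * (f x + g x))) ∂μ :=
        integral_mono_of_nonneg (ae_of_all _ fun _ => Real.sqrt_nonneg _)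
          (hmain_int.add hcross_int)
          (ae_of_all _ fun x => Real.sqrt_shift_mul_shift_le ha hc (hf0 x) (hg0 x))
    _ = a * μ.real Set.univ + c * ∫ x, √(f x * g x) ∂μ + ∫ x, √(a * c * (f x + g x)) ∂μ := by
        rw [integral_add hmain_int hcross_int, integral_add (integrable_const a)
          (haff_int.const_mul c), integral_const, integral_const_mul, smul_eq_mul]
        ring
    _ ≤ _ := by
        gcongr
        rw [← integral_add hf hg, ← integral_const_mul]
        exact integral_sqrt_le_sqrt_measureReal_mul_integral hsum_int hsum_nonneg

end MeasureTheory

theorem shifted_affinity_lower_bound_general {X : Type*} [MeasurableSpace X]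
    (μ : Measure X) [IsFiniteMeasure μ]
    (γ₀ : ℝ) (hγ₀ : γ₀ = (μ Set.univ).toReal)
    (a : ℝ) (ha : 0 ≤ a) (haγ : a * γ₀ < 1)
    (g g₀ : X → ℝ)
    (hg0 : ∀ x, 0 ≤ g x) (hg₀0 : ∀ x, 0 ≤ g₀ x)
    (hgi : Integrable g μ) (hg₀i : Integrable g₀ μ)
    (hg1 : ∫ x, g x ∂μ = 1) (hg₀1 : ∫ x, g₀ x ∂μ = 1) :
    (1 - a * γ₀) * (1 - ∫ x, Real.sqrt (g x * g₀ x) ∂μ)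
        - 2 * Real.sqrt (a * γ₀ * (1 - a * γ₀))
      ≤ 1 - ∫ x, Real.sqrt ((a + (1 - a * γ₀) * g x) * (a + (1 - a * γ₀) * g₀ x)) ∂μ := by
  set c := 1 - a * γ₀
  have hc : 0 ≤ c := by linarith
  have hγ : μ.real Set.univ = γ₀ := hγ₀.symm
  have haγc : 0 ≤ a * γ₀ * c := mul_nonneg (mul_nonneg ha (hγ ▸ measureReal_nonneg)) hc
  have hbound := integral_sqrt_shift_mul_shift_le ha hc hgi hg₀i hg0 hg₀0
  rw [hγ, hg1, hg₀1] at hbound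
  have hcross : √(γ₀ * (a * c * (1 + 1))) ≤ 2 * √(a * γ₀ * c) := by
    rw [Real.sqrt_le_left (by positivity), mul_pow, Real.sq_sqrt haγc]
    linarith
  linarith

/-- Lower bound (3.14) for the affinity of the shifted densities:
`1 - ∫ √(gₐ g₀ₐ) dμ ≥ (1 - aγ₀)(1 - ∫ √(g g₀) dμ) - 2√(aγ₀(1 - aγ₀))`. -/
theorem shifted_affinity_lower_bound {X : Type*} [MeasurableSpace X]
    (μ : Measure X) [IsFiniteMeasure μ]
    (γ₀ : ℝ) (hγ₀ : γ₀ = (μ Set.univ).toReal) (hγpos : 0 < γ₀)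
    (a : ℝ) (ha : 0 ≤ a) (haγ : a * γ₀ < 1)
    (g g₀ : X → ℝ) (hgm : Measurable g) (hg₀m : Measurable g₀)
    (hg0 : ∀ x, 0 ≤ g x) (hg₀0 : ∀ x, 0 ≤ g₀ x)
    (hgi : Integrable g μ) (hg₀i : Integrable g₀ μ)
    (hg1 : ∫ x, g x ∂μ = 1) (hg₀1 : ∫ x, g₀ x ∂μ = 1) :
    (1 - a * γ₀) * (1 - ∫ x, Real.sqrt (g x * g₀ x) ∂μ)
        - 2 * Real.sqrt (a * γ₀ * (1 - a * γ₀))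
      ≤ 1 - ∫ x, Real.sqrt ((a + (1 - a * γ₀) * g x) * (a + (1 - a * γ₀) * g₀ x)) ∂μ :=
  shifted_affinity_lower_bound_general μ γ₀ hγ₀ a ha haγ g g₀ hg0 hg₀0 hgi hg₀i hg1 hg₀1
end

section
/- Let μ be a finite measure on a measurable space X with total mass γ₀ = μ(X) ∈ (0, ∞), let K > 0, ε > 0, and let 0 ≤ a satisfy a·γ₀ < K⁴ε⁴/(16 + K⁴ε⁴). Let g, g₀ be densities with respect to μ with d_H²(g, g₀) ≥ K²ε², and let g_a := a + (1 − aγ₀)·g and g_{0,a} := a + (1 − aγ₀)·g₀ be the shifted densities. Then the constant α := (1 − aγ₀) − 4√(aγ₀(1 − aγ₀))/(K²ε²) is strictly positive, and d_H²(g, g₀) ≤ (1/α)·d_H²(g_a, g_{0,a}). -/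
/-!
Write `√(a + b g) = √b √g + r` with `0 ≤ r ≤ √a`, where `b = 1 - aγ₀`. Expanding the square gives,
pointwise, `(√gₐ - √g₀ₐ)² ≥ b (√g - √g₀)² - 2√(ab) |√g - √g₀|`. After integration, Cauchy–Schwarz
bounds `∫ |√g - √g₀|` by `√(γ₀ d_H²)`, so the loss is at most `2√(aγ₀ b) d_H`; since
`K²ε² ≤ d_H² ≤ 2`, this is at most `(4√(aγ₀ b) / (K²ε²)) d_H²`.
-/

open MeasureTheory

noncomputable def hellingerSq {X : Type*} [MeasurableSpace X] (μ : Measure X) (g g₀ : X → ℝ) :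
    ℝ :=
  ∫ x, (√(g x) - √(g₀ x)) ^ 2 ∂μ

lemma Real.sqrt_sub_sqrt_sq_le_add {x y : ℝ} (hx : 0 ≤ x) (hy : 0 ≤ y) :
    (√x - √y) ^ 2 ≤ x + y := by
  nlinarith [Real.sq_sqrt hx, Real.sq_sqrt hy, Real.sqrt_nonneg x, Real.sqrt_nonneg y]

lemma Real.sqrt_add_sub_sqrt_mem_Icc {a y : ℝ} (ha : 0 ≤ a) (hy : 0 ≤ y) :
    √(a + y) - √y ∈ Set.Icc 0 √a := by
  refine ⟨sub_nonneg.2 (Real.sqrt_le_sqrt (by linarith)), sub_le_iff_le_add.2 ?_⟩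
  refine Real.sqrt_le_iff.2 ⟨by positivity, ?_⟩
  nlinarith [Real.sq_sqrt ha, Real.sq_sqrt hy, Real.sqrt_nonneg a, Real.sqrt_nonneg y]

lemma le_sq_sqrt_add_mul_sub_sqrt_add_mul {a b x y : ℝ} (ha : 0 ≤ a) (hb : 0 ≤ b)
    (hx : 0 ≤ x) (hy : 0 ≤ y) :
    b * (√x - √y) ^ 2 - 2 * √(a * b) * |√x - √y|
      ≤ (√(a + b * x) - √(a + b * y)) ^ 2 := by
  obtain ⟨hu0, hua⟩ := Real.sqrt_add_sub_sqrt_mem_Icc ha (mul_nonneg hb hx)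
  obtain ⟨hv0, hva⟩ := Real.sqrt_add_sub_sqrt_mem_Icc ha (mul_nonneg hb hy)
  set d := (√(a + b * x) - √(b * x)) - (√(a + b * y) - √(b * y))
  have hd : |d| ≤ √a := abs_sub_le_iff.2 ⟨by linarith, by linarith⟩
  have hsplit : √(a + b * x) - √(a + b * y) = √b * (√x - √y) + d := by
    simp only [d, Real.sqrt_mul hb]; ring
  have hcross : |√b * (√x - √y) * d| ≤ √a * √b * |√x - √y| := by
    rw [abs_mul, abs_mul, abs_of_nonneg (Real.sqrt_nonneg b)]
    calc √b * |√x - √y| * |d| ≤ √b * |√x - √y| * √a := by gcongr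
      _ = √a * √b * |√x - √y| := by ring
  rw [hsplit, Real.sqrt_mul ha]
  nlinarith [neg_abs_le (√b * (√x - √y) * d), sq_nonneg d, Real.sq_sqrt hb]

section

variable {X : Type*} [MeasurableSpace X] {μ : Measure X}

lemma integral_abs_le_sqrt_measureReal_univ_mul_integral_sq [IsFiniteMeasure μ] {f : X → ℝ}
    (hf : MemLp f 2 μ) :
    ∫ x, |f x| ∂μ ≤ √(μ.real Set.univ * ∫ x, f x ^ 2 ∂μ) := by
  have holder := integral_mul_le_Lp_mul_Lq_of_nonneg Real.HolderConjugate.two_two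
    (f := fun x => |f x|) (g := fun _ => (1 : ℝ)) (μ := μ)
    (Filter.Eventually.of_forall fun x => abs_nonneg (f x))
    (Filter.Eventually.of_forall fun _ => zero_le_one)
    (by rw [ENNReal.ofReal_ofNat]; exact hf.abs) (memLp_const 1)
  simp only [mul_one, Real.rpow_two, sq_abs, one_pow, integral_const, smul_eq_mul,
    ← Real.sqrt_eq_rpow] at holder
  rwa [← Real.sqrt_mul' _ measureReal_nonneg, mul_comm (∫ _, _ ∂μ)] at holder

variable {g g₀ : X → ℝ}

lemma integrable_sqrt_sub_sqrt_sq (hg : ∀ x, 0 ≤ g x) (hg₀ : ∀ x, 0 ≤ g₀ x)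
    (hgi : Integrable g μ) (hg₀i : Integrable g₀ μ) :
    Integrable (fun x => (√(g x) - √(g₀ x)) ^ 2) μ :=
  (hgi.add hg₀i).mono'
    ((hgi.aemeasurable.sqrt.sub hg₀i.aemeasurable.sqrt).pow_const 2).aestronglyMeasurable
    (Filter.Eventually.of_forall fun x => by
      rw [Real.norm_of_nonneg (sq_nonneg _)]
      exact Real.sqrt_sub_sqrt_sq_le_add (hg x) (hg₀ x))

lemma hellingerSq_le_two (hg : ∀ x, 0 ≤ g x) (hg₀ : ∀ x, 0 ≤ g₀ x)
    (hgi : Integrable g μ) (hg₀i : Integrable g₀ μ)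
    (hg1 : ∫ x, g x ∂μ = 1) (hg₀1 : ∫ x, g₀ x ∂μ = 1) :
    hellingerSq μ g g₀ ≤ 2 := by
  calc hellingerSq μ g g₀ ≤ ∫ x, (g x + g₀ x) ∂μ :=
        integral_mono (integrable_sqrt_sub_sqrt_sq hg hg₀ hgi hg₀i) (hgi.add hg₀i)
          fun x => Real.sqrt_sub_sqrt_sq_le_add (hg x) (hg₀ x)
    _ = 2 := by rw [integral_add hgi hg₀i, hg1, hg₀1]; norm_num

lemma le_hellingerSq_const_add_mul [IsFiniteMeasure μ] {a b : ℝ} (ha : 0 ≤ a) (hb : 0 ≤ b)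
    (hg : ∀ x, 0 ≤ g x) (hg₀ : ∀ x, 0 ≤ g₀ x) (hgi : Integrable g μ) (hg₀i : Integrable g₀ μ) :
    b * hellingerSq μ g g₀ - 2 * √(a * b) * √(μ.real Set.univ * hellingerSq μ g g₀)
      ≤ hellingerSq μ (fun x => a + b * g x) (fun x => a + b * g₀ x) := by
  have hshift : ∀ {h : X → ℝ}, (∀ x, 0 ≤ h x) → Integrable h μ →
      (∀ x, 0 ≤ a + b * h x) ∧ Integrable (fun x => a + b * h x) μ :=
    fun hh hhi => ⟨fun x => by have := hh x; positivity, (integrable_const a).add (hhi.const_mul b)⟩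
  obtain ⟨hga, hgai⟩ := hshift hg hgi
  obtain ⟨hg₀a, hg₀ai⟩ := hshift hg₀ hg₀i
  have hsq := integrable_sqrt_sub_sqrt_sq hg hg₀ hgi hg₀i
  have hmemLp : MemLp (fun x => √(g x) - √(g₀ x)) 2 μ :=
    (memLp_two_iff_integrable_sq
      (hgi.aemeasurable.sqrt.sub hg₀i.aemeasurable.sqrt).aestronglyMeasurable).2 hsq
  calc b * hellingerSq μ g g₀ - 2 * √(a * b) * √(μ.real Set.univ * hellingerSq μ g g₀)
      ≤ b * hellingerSq μ g g₀ - 2 * √(a * b) * ∫ x, |√(g x) - √(g₀ x)| ∂μ := by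
        gcongr; exact integral_abs_le_sqrt_measureReal_univ_mul_integral_sq hmemLp
    _ = ∫ x, (b * (√(g x) - √(g₀ x)) ^ 2 - 2 * √(a * b) * |√(g x) - √(g₀ x)|) ∂μ := by
        rw [integral_sub (hsq.const_mul b) ((hmemLp.integrable one_le_two).abs.const_mul _),
          integral_const_mul, integral_const_mul]; rfl
    _ ≤ _ := integral_mono ((hsq.const_mul b).sub
          ((hmemLp.integrable one_le_two).abs.const_mul _))
        (integrable_sqrt_sub_sqrt_sq hga hg₀a hgai hg₀ai)
        fun x => le_sq_sqrt_add_mul_sub_sqrt_add_mul ha hb (hg x) (hg₀ x)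

end

lemma sub_four_sqrt_mul_div_pos {s c : ℝ} (hc : 0 < c)
    (hsc : s < c ^ 2 / (16 + c ^ 2)) :
    0 < (1 - s) - 4 * √(s * (1 - s)) / c := by
  rw [lt_div_iff₀ (by positivity)] at hsc
  have hs1 : 0 < 1 - s := by nlinarith
  have hsqrt : √(s * (1 - s)) < (1 - s) * c / 4 :=
    (Real.sqrt_lt' (by positivity)).2 (by nlinarith)
  rw [sub_pos, div_lt_iff₀ hc]
  linarith

lemma sqrt_le_two_div_mul {c H : ℝ} (hc : 0 < c) (hcH : c ≤ H) (hH : H ≤ 4) :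
    √H ≤ 2 / c * H := by
  have hH0 : 0 ≤ H := hc.le.trans hcH
  have hsqrt : √H ≤ 2 := Real.sqrt_le_iff.2 ⟨zero_le_two, by linarith⟩
  rw [div_mul_eq_mul_div, le_div_iff₀ hc]
  nlinarith [Real.sq_sqrt hH0, Real.sqrt_nonneg H]

theorem hellinger_le_inv_alpha_mul_shifted_hellinger_general {X : Type*} [MeasurableSpace X]
    (μ : Measure X) [IsFiniteMeasure μ]
    (γ₀ : ℝ) (hγ₀ : γ₀ = (μ Set.univ).toReal)
    (K ε : ℝ) (hK : 0 < K) (hε : 0 < ε)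
    (a : ℝ) (ha : 0 ≤ a)
    (haγ : a * γ₀ < K ^ 4 * ε ^ 4 / (16 + K ^ 4 * ε ^ 4))
    (g g₀ : X → ℝ)
    (hg0 : ∀ x, 0 ≤ g x) (hg₀0 : ∀ x, 0 ≤ g₀ x)
    (hgi : Integrable g μ) (hg₀i : Integrable g₀ μ)
    (hg1 : ∫ x, g x ∂μ = 1) (hg₀1 : ∫ x, g₀ x ∂μ = 1)
    (hsep : K ^ 2 * ε ^ 2 ≤ ∫ x, (Real.sqrt (g x) - Real.sqrt (g₀ x)) ^ 2 ∂μ) :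
    0 < (1 - a * γ₀) - 4 * Real.sqrt (a * γ₀ * (1 - a * γ₀)) / (K ^ 2 * ε ^ 2) ∧
      ∫ x, (Real.sqrt (g x) - Real.sqrt (g₀ x)) ^ 2 ∂μ
        ≤ (1 / ((1 - a * γ₀) - 4 * Real.sqrt (a * γ₀ * (1 - a * γ₀)) / (K ^ 2 * ε ^ 2)))
            * ∫ x, (Real.sqrt (a + (1 - a * γ₀) * g x)
                - Real.sqrt (a + (1 - a * γ₀) * g₀ x)) ^ 2 ∂μ := by
  change K ^ 2 * ε ^ 2 ≤ hellingerSq μ g g₀ at hsep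
  change _ ∧ hellingerSq μ g g₀ ≤ _ * hellingerSq μ (fun x => a + _ * g x) (fun x => a + _ * g₀ x)
  have hH := hellingerSq_le_two hg0 hg₀0 hgi hg₀i hg1 hg₀1
  set c := K ^ 2 * ε ^ 2
  set s := a * γ₀ with hs_def
  have hc : 0 < c := by positivity
  have hs : 0 ≤ s := mul_nonneg ha (hγ₀ ▸ ENNReal.toReal_nonneg)
  have hα := sub_four_sqrt_mul_div_pos hc (by convert haγ using 2 <;> ring)
  refine ⟨hα, ?_⟩
  have hb : 0 ≤ 1 - s := by
    have : 0 ≤ 4 * √(s * (1 - s)) / c := by positivity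
    linarith
  have hshift := le_hellingerSq_const_add_mul (μ := μ) ha hb hg0 hg₀0 hgi hg₀i
  set H := hellingerSq μ g g₀
  have hroots : √(a * (1 - s)) * √(μ.real Set.univ * H) = √(s * (1 - s)) * √H := by
    rw [← Real.sqrt_mul (mul_nonneg ha hb), ← Real.sqrt_mul (mul_nonneg hs hb), measureReal_def,
      ← hγ₀, hs_def]
    ring_nf
  have hpenalty := mul_le_mul_of_nonneg_left (sqrt_le_two_div_mul hc hsep (by linarith))
    (Real.sqrt_nonneg (s * (1 - s)))
  rw [one_div_mul_eq_div, le_div_iff₀ hα]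
  calc H * (1 - s - 4 * √(s * (1 - s)) / c)
      = (1 - s) * H - 2 * (√(s * (1 - s)) * (2 / c * H)) := by ring
    _ ≤ (1 - s) * H - 2 * (√(a * (1 - s)) * √(μ.real Set.univ * H)) := by linarith
    _ ≤ _ := by linarith

/-- The shifting lemma (Lemma 3.1): if `aγ₀ < K⁴ε⁴/(16 + K⁴ε⁴)` and
`d_H²(g, g₀) ≥ K²ε²`, then `α := (1 - aγ₀) - 4√(aγ₀(1 - aγ₀))/(K²ε²) > 0` and
`d_H²(g, g₀) ≤ α⁻¹ d_H²(gₐ, g₀ₐ)` for the shifted densities. -/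
theorem hellinger_le_inv_alpha_mul_shifted_hellinger {X : Type*} [MeasurableSpace X]
    (μ : Measure X) [IsFiniteMeasure μ]
    (γ₀ : ℝ) (hγ₀ : γ₀ = (μ Set.univ).toReal) (hγpos : 0 < γ₀)
    (K ε : ℝ) (hK : 0 < K) (hε : 0 < ε)
    (a : ℝ) (ha : 0 ≤ a)
    (haγ : a * γ₀ < K ^ 4 * ε ^ 4 / (16 + K ^ 4 * ε ^ 4))
    (g g₀ : X → ℝ) (hgm : Measurable g) (hg₀m : Measurable g₀)
    (hg0 : ∀ x, 0 ≤ g x) (hg₀0 : ∀ x, 0 ≤ g₀ x)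
    (hgi : Integrable g μ) (hg₀i : Integrable g₀ μ)
    (hg1 : ∫ x, g x ∂μ = 1) (hg₀1 : ∫ x, g₀ x ∂μ = 1)
    (hsep : K ^ 2 * ε ^ 2 ≤ ∫ x, (Real.sqrt (g x) - Real.sqrt (g₀ x)) ^ 2 ∂μ) :
    0 < (1 - a * γ₀) - 4 * Real.sqrt (a * γ₀ * (1 - a * γ₀)) / (K ^ 2 * ε ^ 2) ∧
      ∫ x, (Real.sqrt (g x) - Real.sqrt (g₀ x)) ^ 2 ∂μ
        ≤ (1 / ((1 - a * γ₀) - 4 * Real.sqrt (a * γ₀ * (1 - a * γ₀)) / (K ^ 2 * ε ^ 2)))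
            * ∫ x, (Real.sqrt (a + (1 - a * γ₀) * g x)
                - Real.sqrt (a + (1 - a * γ₀) * g₀ x)) ^ 2 ∂μ :=
  hellinger_le_inv_alpha_mul_shifted_hellinger_general μ γ₀ hγ₀ K ε hK hε a ha haγ g g₀ hg0 hg₀0 hgi
    hg₀i hg1 hg₀1 hsep
end

section
/- Let μ be a finite measure on a measurable space X with total mass γ₀ = μ(X) ∈ (0, ∞), let 0 ≤ a with a·γ₀ ≤ 1, and let g₀ be a density with respect to μ. Then the shifted density g_{0,a} := a + (1 − aγ₀)·g₀ satisfies d_H²(g_{0,a}, g₀) = ∫_X (√(g_{0,a}(x)) − √(g₀(x)))² dμ(x) ≤ 2·γ₀·a. -/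
/-! Pointwise, `(√u - √v)² ≤ |u - v|` and `|g₀ₐ - g₀| = |a - aγ₀ g₀| ≤ a + aγ₀ g₀`;
the right-hand side integrates to `aγ₀ + aγ₀ = 2γ₀a`. -/

open MeasureTheory

lemma Real.sq_sqrt_sub_sqrt_le_abs_sub {u v : ℝ} (hu : 0 ≤ u) (hv : 0 ≤ v) :
    (√u - √v) ^ 2 ≤ |u - v| :=
  calc (√u - √v) ^ 2 = |√u - √v| * |√u - √v| := by rw [abs_mul_abs_self, sq]
    _ ≤ |√u - √v| * |√u + √v| := by
      have hu' := Real.sqrt_nonneg u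
      have hv' := Real.sqrt_nonneg v
      rw [abs_of_nonneg (add_nonneg hu' hv')]
      gcongr
      exact abs_sub_le_iff.2 ⟨by linarith, by linarith⟩
    _ = |u - v| := by
      rw [← abs_mul, mul_comm, ← sq_sub_sq, Real.sq_sqrt hu, Real.sq_sqrt hv]

lemma sq_sqrt_shift_sub_sqrt_le {a c t : ℝ} (ha : 0 ≤ a) (hc : 0 ≤ c) (hc₁ : c ≤ 1)
    (ht : 0 ≤ t) : (√(a + (1 - c) * t) - √t) ^ 2 ≤ a + c * t :=
  calc (√(a + (1 - c) * t) - √t) ^ 2 ≤ |a + (1 - c) * t - t| :=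
        Real.sq_sqrt_sub_sqrt_le_abs_sub (by nlinarith) ht
    _ = |a - c * t| := by ring_nf
    _ ≤ a + c * t := by
      rw [abs_le]
      constructor <;> nlinarith [mul_nonneg hc ht]

theorem hellinger_sq_shift_le_general {X : Type*} [MeasurableSpace X]
    (μ : Measure X) [IsFiniteMeasure μ]
    (γ₀ : ℝ) (hγ₀ : γ₀ = (μ Set.univ).toReal)
    (a : ℝ) (ha : 0 ≤ a) (haγ : a * γ₀ ≤ 1)
    (g₀ : X → ℝ) (hg₀0 : ∀ x, 0 ≤ g₀ x)
    (hg₀i : Integrable g₀ μ) (hg₀1 : ∫ x, g₀ x ∂μ = 1) :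
    ∫ x, (Real.sqrt (a + (1 - a * γ₀) * g₀ x) - Real.sqrt (g₀ x)) ^ 2 ∂μ
      ≤ 2 * γ₀ * a := by
  have hγ₀_nonneg : 0 ≤ γ₀ := hγ₀ ▸ ENNReal.toReal_nonneg
  calc ∫ x, (√(a + (1 - a * γ₀) * g₀ x) - √(g₀ x)) ^ 2 ∂μ
      ≤ ∫ x, (a + a * γ₀ * g₀ x) ∂μ :=
        integral_mono_of_nonneg (ae_of_all _ fun _ => sq_nonneg _)
          ((integrable_const a).add (hg₀i.const_mul _))
          (ae_of_all _ fun x =>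
            sq_sqrt_shift_sub_sqrt_le ha (mul_nonneg ha hγ₀_nonneg) haγ (hg₀0 x))
    _ = a * γ₀ + a * γ₀ * ∫ x, g₀ x ∂μ := by
      rw [integral_add (integrable_const a) (hg₀i.const_mul _), integral_const,
        integral_const_mul, smul_eq_mul, measureReal_def, ← hγ₀, mul_comm γ₀]
    _ = 2 * γ₀ * a := by rw [hg₀1]; ring

/-- The squared Hellinger distance between a density and its shift:
`d_H²(g₀ₐ, g₀) ≤ 2γ₀a`. -/
theorem hellinger_sq_shift_le {X : Type*} [MeasurableSpace X]
    (μ : Measure X) [IsFiniteMeasure μ]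
    (γ₀ : ℝ) (hγ₀ : γ₀ = (μ Set.univ).toReal) (hγpos : 0 < γ₀)
    (a : ℝ) (ha : 0 ≤ a) (haγ : a * γ₀ ≤ 1)
    (g₀ : X → ℝ) (hg₀m : Measurable g₀) (hg₀0 : ∀ x, 0 ≤ g₀ x)
    (hg₀i : Integrable g₀ μ) (hg₀1 : ∫ x, g₀ x ∂μ = 1) :
    ∫ x, (Real.sqrt (a + (1 - a * γ₀) * g₀ x) - Real.sqrt (g₀ x)) ^ 2 ∂μ
      ≤ 2 * γ₀ * a :=
  hellinger_sq_shift_le_general μ γ₀ hγ₀ a ha haγ g₀ hg₀0 hg₀i hg₀1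
end
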